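/- arXiv:2502.21193 — 2 statements merged into one kernel-verified Lean document; each statement's English description precedes it below -/
import Mathlib

section
/- Let W : ℝ^n → ℝ^m be a linear map and let x_in : ℕ → ℝ^n, x_out : ℕ → ℝ^m, m : ℕ → ℝ^m, v : ℕ → ℝ^m be sequences satisfying, for every integer t ≥ 1, the neuron dynamics m(t) = v(t−1) + W(x_in(t)) and v(t) = m(t) − x_out(t). Then for every integer T ≥ 1, (1/T) • ∑_{t=1}^{T} x_out(t) = W((1/T) • ∑_{t=1}^{T} x_in(t)) − (1/T) • (v(T) − v(0)). -/
/-!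
Each step of the soft-reset dynamics gives `x_out t = W (x_in t) + (v (t - 1) - v t)`.
Summing over `t = 1, …, T`, the residual terms telescope to `v 0 - v T`, and additivity of `W`
pulls the sum of inputs inside; dividing by `T` gives the average.
-/

open Finset

theorem Finset.sum_Icc_one_pred_sub {G : Type*} [AddCommGroup G] (f : ℕ → G) (T : ℕ) :
    ∑ t ∈ Icc 1 T, (f (t - 1) - f t) = f 0 - f T := by
  induction T with
  | zero => simp
  | succ T ih => rw [sum_Icc_succ_top (by omega), ih, Nat.add_sub_cancel]; abel

theorem sum_soft_reset_output {G H F : Type*} [AddCommGroup G] [AddCommGroup H]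
    [FunLike F G H] [AddMonoidHomClass F G H] (W : F) (x_in : ℕ → G) (x_out mem v : ℕ → H)
    (hmem : ∀ t : ℕ, 1 ≤ t → mem t = v (t - 1) + W (x_in t))
    (hv : ∀ t : ℕ, 1 ≤ t → v t = mem t - x_out t) (T : ℕ) :
    ∑ t ∈ Icc 1 T, x_out t = W (∑ t ∈ Icc 1 T, x_in t) - (v T - v 0) := by
  have hstep : ∀ t ∈ Icc 1 T, x_out t = W (x_in t) + (v (t - 1) - v t) := by
    intro t ht
    rw [hv t (mem_Icc.1 ht).1, hmem t (mem_Icc.1 ht).1]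
    abel
  rw [sum_congr rfl hstep, sum_add_distrib, sum_Icc_one_pred_sub, map_sum]
  abel

/-- Average postsynaptic potential of a soft-reset IF neuron over the first `T`
time steps equals the linear layer applied to the average input, minus the
residual membrane-potential term `(v(T) - v(0))/T`. -/
theorem soft_reset_average_output
    {n m : ℕ} (W : (Fin n → ℝ) →ₗ[ℝ] (Fin m → ℝ))
    (x_in : ℕ → Fin n → ℝ) (x_out mem v : ℕ → Fin m → ℝ)
    (hmem : ∀ t : ℕ, 1 ≤ t → mem t = v (t - 1) + W (x_in t))
    (hv : ∀ t : ℕ, 1 ≤ t → v t = mem t - x_out t) :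
    ∀ T : ℕ, 1 ≤ T →
      (1 / (T : ℝ)) • ∑ t ∈ Finset.Icc 1 T, x_out t
        = W ((1 / (T : ℝ)) • ∑ t ∈ Finset.Icc 1 T, x_in t)
          - (1 / (T : ℝ)) • (v T - v 0) := by
  intro T _
  rw [sum_soft_reset_output W x_in x_out mem v hmem hv T, map_smul, smul_sub]
end

section
/- Let W : ℝ^n → ℝ^m be a linear map and let x_in : ℕ → ℝ^n, x_out : ℕ → ℝ^m, m : ℕ → ℝ^m, v : ℕ → ℝ^m be sequences satisfying, for every integer t ≥ 1, m(t) = v(t−1) + W(x_in(t)) and v(t) = m(t) − x_out(t). If there exists C such that ‖v(T)‖ ≤ C for all T ≥ 0, then ‖(1/T) • ∑_{t=1}^{T} x_out(t) − W((1/T) • ∑_{t=1}^{T} x_in(t))‖ tends to 0 as T → ∞. -/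
/-- If the membrane potential of a soft-reset IF neuron stays bounded, the
average postsynaptic output converges to the linear ANN layer output applied
to the average input as the number of time steps grows. -/
theorem soft_reset_average_output_tendsto
    {n m : ℕ} (W : (Fin n → ℝ) →ₗ[ℝ] (Fin m → ℝ))
    (x_in : ℕ → Fin n → ℝ) (x_out mem v : ℕ → Fin m → ℝ)
    (hmem : ∀ t : ℕ, 1 ≤ t → mem t = v (t - 1) + W (x_in t))
    (hv : ∀ t : ℕ, 1 ≤ t → v t = mem t - x_out t)
    (C : ℝ) (hbound : ∀ T : ℕ, ‖v T‖ ≤ C) :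
    Filter.Tendsto
      (fun T : ℕ =>
        ‖(1 / (T : ℝ)) • ∑ t ∈ Finset.Icc 1 T, x_out t
          - W ((1 / (T : ℝ)) • ∑ t ∈ Finset.Icc 1 T, x_in t)‖)
      Filter.atTop (nhds 0) := by
  have key : ∀ T : ℕ, ∑ t ∈ Finset.Icc 1 T, x_out t
      = v 0 - v T + W (∑ t ∈ Finset.Icc 1 T, x_in t) := by
    intro T
    induction T with
    | zero => simp
    | succ T ih =>
      rw [Finset.sum_Icc_succ_top (by omega : 1 ≤ T + 1),
          Finset.sum_Icc_succ_top (by omega : 1 ≤ T + 1), ih,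
          hv (T + 1) (by omega), hmem (T + 1) (by omega), map_add]
      simp only [Nat.add_sub_cancel]
      abel
  have h0 : Filter.Tendsto (fun T : ℕ => (1 / (T : ℝ)) * (2 * C))
      Filter.atTop (nhds 0) := by
    have := (tendsto_one_div_atTop_nhds_zero_nat).mul_const (2 * C)
    simpa using this
  refine squeeze_zero (fun T => norm_nonneg _) ?_ h0
  intro T
  have hT : (1 / (T : ℝ)) • ∑ t ∈ Finset.Icc 1 T, x_out t
      - W ((1 / (T : ℝ)) • ∑ t ∈ Finset.Icc 1 T, x_in t)
      = (1 / (T : ℝ)) • (v 0 - v T) := by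
    rw [key T, map_smul]
    module
  rw [hT, norm_smul]
  have : ‖v 0 - v T‖ ≤ 2 * C := by
    calc ‖v 0 - v T‖ ≤ ‖v 0‖ + ‖v T‖ := norm_sub_le _ _
    _ ≤ C + C := add_le_add (hbound 0) (hbound T)
    _ = 2 * C := by ring
  calc ‖(1 / (T : ℝ))‖ * ‖v 0 - v T‖ ≤ ‖(1 / (T : ℝ))‖ * (2 * C) :=
        mul_le_mul_of_nonneg_left this (norm_nonneg _)
    _ = (1 / (T : ℝ)) * (2 * C) := by
        rw [Real.norm_eq_abs, abs_of_nonneg (by positivity)]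
end
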